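/- Let F : h^m → h^n be a normally analytic germ. Then the differential map (u,v) ↦ dF(u)v, viewed as a germ h^m × h^m → h^n, is normally analytic, and its majorant satisfies (dF(|u|)|v|)̲ ≤ dF̲(|u|)|v| componentwise. -/

import Mathlib

open scoped ENNReal NNReal BigOperators ComplexConjugate

noncomputable section

/-- A pair of multi-indices `(α, β)` in `Z_+^∞` with finite support. -/
abbrev MIdx := (ℕ →₀ ℕ) × (ℕ →₀ ℕ)

/-- Total degree `|α| + |β|` of a pair of multi-indices. -/
def mdeg (p : MIdx) : ℕ := (p.1.sum fun _ n => n) + (p.2.sum fun _ n => n)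

/-- `u^α = ∏ u_j^{α_j}` for a complex sequence `u`. -/
def cpow (u : ℕ → ℂ) (α : ℕ →₀ ℕ) : ℂ := α.prod fun j n => u j ^ n

/-- `v^α = ∏ v_j^{α_j}` for a nonnegative (extended real) sequence `v`. -/
def epow (v : ℕ → ℝ≥0∞) (α : ℕ →₀ ℕ) : ℝ≥0∞ := α.prod fun j n => v j ^ n

/-- A map of sequence spaces given by a power series `F^j(u) = Σ_{α,β} A^j_{αβ} u^α ū^β`. -/
structure PSMap where
  coeff : ℕ → MIdx → ℂ

/-- The value `F^j(u)` of the power series map. -/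
def PSMap.app (F : PSMap) (u : ℕ → ℂ) (j : ℕ) : ℂ :=
  ∑' p : MIdx, F.coeff j p * cpow u p.1 * cpow (fun i => conj (u i)) p.2

/-- The majorant series `F̲^j(v) = Σ |A^j_{αβ}| v^{α+β}` evaluated at a nonnegative sequence. -/
def PSMap.maj (F : PSMap) (v : ℕ → ℝ≥0∞) (j : ℕ) : ℝ≥0∞ :=
  ∑' p : MIdx, (‖F.coeff j p‖₊ : ℝ≥0∞) * epow v (p.1 + p.2)

/-- The `N`-homogeneous part `F̲_N` of the majorant series. -/
def PSMap.majN (F : PSMap) (N : ℕ) (v : ℕ → ℝ≥0∞) (j : ℕ) : ℝ≥0∞ :=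
  ∑' p : MIdx, if mdeg p = N then (‖F.coeff j p‖₊ : ℝ≥0∞) * epow v (p.1 + p.2) else 0

/-- The (extended-real valued) norm of the weighted `l²` space `h^m`; sequences are indexed by
`j ≥ 1`, here represented by `j ∈ ℕ` with weight `(j+1)^{2m}`. -/
def hnorm (m : ℝ) (v : ℕ → ℝ≥0∞) : ℝ≥0∞ :=
  (∑' j : ℕ, ((j : ℝ≥0∞) + 1) ^ (2 * m) * v j ^ 2) ^ ((1 : ℝ) / 2)

/-- The sequence of moduli `|u| = (|u_1|, |u_2|, …)`. -/
def cabs (u : ℕ → ℂ) : ℕ → ℝ≥0∞ := fun j => (‖u j‖₊ : ℝ≥0∞)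

/-- A power-series germ `F : h^m → h^n`, `F(0) = 0`, is *normally analytic* if its majorant
`F̲` defines a real-analytic germ `h_R^m → h_R^n`, i.e. each `N`-homogeneous part satisfies
`‖F̲_N(v)‖_n ≤ C R^N ‖v‖_m^N`. -/
def NormAnalytic (m n : ℝ) (F : PSMap) : Prop :=
  (∀ j, F.coeff j (0, 0) = 0) ∧
  ∃ C R : ℝ≥0∞, 0 < C ∧ C < ∞ ∧ 0 < R ∧ R < ∞ ∧
    ∀ (N : ℕ) (v : ℕ → ℝ≥0∞), hnorm n (F.majN N v) ≤ C * R ^ N * hnorm m v ^ N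

/-- The differential `dF^j(u)(v) = Σ_{α,β} Σ_r A^j_{αβ} (α_r v_r u^{α-1_r} ū^β
+ β_r v̄_r u^α ū^{β-1_r})`. -/
def PSMap.dapp (F : PSMap) (u v : ℕ → ℂ) (j : ℕ) : ℂ :=
  ∑' (p : MIdx) (r : ℕ),
    F.coeff j p *
      ((p.1 r : ℂ) * v r * cpow u (p.1 - Finsupp.single r 1) * cpow (fun i => conj (u i)) p.2 +
        (p.2 r : ℂ) * conj (v r) * cpow u p.1 *
          cpow (fun i => conj (u i)) (p.2 - Finsupp.single r 1))

/-- The differential of the majorant series, `dF̲(w)x = Σ_{α,β} Σ_r |A^j_{αβ}|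
(α_r + β_r) x_r w^{α+β-1_r}`. -/
def PSMap.dmaj (F : PSMap) (w x : ℕ → ℝ≥0∞) (j : ℕ) : ℝ≥0∞ :=
  ∑' (p : MIdx) (r : ℕ),
    (‖F.coeff j p‖₊ : ℝ≥0∞) * ((p.1 r : ℝ≥0∞) + (p.2 r : ℝ≥0∞)) * x r *
      epow w (p.1 + p.2 - Finsupp.single r 1)

/-- The part of `dF̲(w)x` coming from the terms of total degree `N` of `F`. -/
def PSMap.dmajN (F : PSMap) (N : ℕ) (w x : ℕ → ℝ≥0∞) (j : ℕ) : ℝ≥0∞ :=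
  ∑' (p : MIdx) (r : ℕ),
    if mdeg p = N then
      (‖F.coeff j p‖₊ : ℝ≥0∞) * ((p.1 r : ℝ≥0∞) + (p.2 r : ℝ≥0∞)) * x r *
        epow w (p.1 + p.2 - Finsupp.single r 1)
    else 0

/-!
Write `γ = α + β`. The `(α, β)`-term of `dF̲(w)x` is `|A_{αβ}|` times the directional
derivative `∂ₓ w^γ = Σ_r γ_r x_r w^{γ - 1_r}`, which obeys the Leibniz rule; by induction on
`γ` this gives `∂ₓ w^γ ≤ (w + x)^γ`, hence `dF̲_N(w)x ≤ F̲_N(w + x)` componentwise. As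
`dF̲_N(w)x` is linear in `x`, applying this to `(w, t x)` with `t = ‖w‖/‖x‖` yields
`t ‖dF̲_N(w)x‖ ≤ C R^N (2‖w‖)^N`, i.e. the estimate with constants `C` and `2R`. In degree `1`,
`dF̲_1(w)x = F̲_1(x)` does not depend on `w`.

The bound `|dF(u)v| ≤ dF̲(|u|)|v|` is the triangle inequality applied term by term.
-/

open Finsupp

theorem ENNReal.tsum_rpow_add_le {ι : Type*} (f g : ι → ℝ≥0∞) {p : ℝ} (hp : 1 ≤ p) :
    (∑' i, (f i + g i) ^ p) ^ (1 / p) ≤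
      (∑' i, f i ^ p) ^ (1 / p) + (∑' i, g i ^ p) ^ (1 / p) := by
  let _ : MeasurableSpace ι := ⊤
  simpa only [MeasureTheory.lintegral_count, Pi.add_apply] using
    ENNReal.lintegral_Lp_add_le (μ := MeasureTheory.Measure.count)
      (Measurable.of_discrete (f := f)).aemeasurable
      (Measurable.of_discrete (f := g)).aemeasurable hp

section WeightedNorm

variable {m : ℝ}

lemma hnorm_eq_tsum_rpow (v : ℕ → ℝ≥0∞) :
    hnorm m v = (∑' j : ℕ, (((j : ℝ≥0∞) + 1) ^ m * v j) ^ (2 : ℝ)) ^ (1 / (2 : ℝ)) := by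
  unfold hnorm
  congr 2 with j
  rw [mul_comm 2 m, ENNReal.rpow_mul, ENNReal.rpow_two, ENNReal.rpow_two, mul_pow]

lemma hnorm_add_le (v w : ℕ → ℝ≥0∞) : hnorm m (v + w) ≤ hnorm m v + hnorm m w := by
  simp only [hnorm_eq_tsum_rpow, Pi.add_apply, mul_add]
  exact ENNReal.tsum_rpow_add_le _ _ one_le_two

lemma hnorm_smul (t : ℝ≥0∞) (v : ℕ → ℝ≥0∞) : hnorm m (t • v) = t * hnorm m v := by
  simp only [hnorm_eq_tsum_rpow, Pi.smul_apply, smul_eq_mul, mul_left_comm _ t,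
    ENNReal.mul_rpow_of_nonneg _ _ zero_le_two, ENNReal.tsum_mul_left]
  rw [ENNReal.mul_rpow_of_nonneg _ _ (by norm_num), ← ENNReal.rpow_mul]
  norm_num

lemma hnorm_mono {v w : ℕ → ℝ≥0∞} (h : v ≤ w) : hnorm m v ≤ hnorm m w := by
  unfold hnorm
  gcongr with j
  exact h j

lemma hnorm_eq_zero_iff {v : ℕ → ℝ≥0∞} : hnorm m v = 0 ↔ v = 0 := by
  simp [hnorm, ENNReal.rpow_eq_zero_iff, ENNReal.tsum_eq_zero, funext_iff]

end WeightedNorm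

section Monomial

variable (w x : ℕ → ℝ≥0∞)

lemma epow_add (α β : ℕ →₀ ℕ) : epow w (α + β) = epow w α * epow w β :=
  prod_add_index' (fun _ => pow_zero _) fun _ => pow_add _

@[simp]
lemma epow_zero : epow w 0 = 1 := prod_zero_index

lemma epow_single (a k : ℕ) : epow w (single a k) = w a ^ k := prod_single_index (pow_zero _)

lemma epow_mono {w w' : ℕ → ℝ≥0∞} (h : w ≤ w') (α : ℕ →₀ ℕ) : epow w α ≤ epow w' α :=
  Finset.prod_le_prod' fun i _ => pow_le_pow_left' (h i) _

lemma epow_zero_left {α : ℕ →₀ ℕ} (hα : α ≠ 0) : epow 0 α = 0 := by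
  obtain ⟨a, ha⟩ := support_nonempty_iff.mpr hα
  exact Finset.prod_eq_zero ha (zero_pow (mem_support_iff.mp ha))

lemma natCast_mul_epow_tsub_single (γ δ : ℕ →₀ ℕ) (r : ℕ) :
    (γ r : ℝ≥0∞) * (epow w (γ - single r 1) * epow w δ) =
      γ r * epow w (γ + δ - single r 1) := by
  rcases eq_or_ne (γ r) 0 with h | h
  · simp [h]
  · rw [← epow_add, tsub_add_eq_add_tsub (single_le_iff.mpr (Nat.one_le_iff_ne_zero.mpr h))]

/-- The derivative of the monomial `w ↦ w ^ γ` at `w` in the direction `x`. -/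
def epowDeriv (γ : ℕ →₀ ℕ) : ℝ≥0∞ :=
  ∑' r, (γ r : ℝ≥0∞) * x r * epow w (γ - single r 1)

@[simp]
lemma epowDeriv_zero : epowDeriv w x 0 = 0 := by simp [epowDeriv]

lemma epowDeriv_add (α β : ℕ →₀ ℕ) :
    epowDeriv w x (α + β) = epowDeriv w x α * epow w β + epow w α * epowDeriv w x β := by
  simp only [epowDeriv, ← ENNReal.tsum_mul_right, ← ENNReal.tsum_mul_left, ← ENNReal.tsum_add]
  congr 1 with r
  have hα := natCast_mul_epow_tsub_single w α β r
  have hβ := natCast_mul_epow_tsub_single w β α r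
  rw [add_comm β] at hβ
  calc ((α + β) r : ℝ≥0∞) * x r * epow w (α + β - single r 1)
      = x r * (α r * (epow w (α - single r 1) * epow w β)) +
          x r * (β r * (epow w (β - single r 1) * epow w α)) := by
        rw [hα, hβ, coe_add, Pi.add_apply, Nat.cast_add]; ring
    _ = _ := by ring

lemma epowDeriv_single_one (a : ℕ) : epowDeriv w x (single a 1) = x a := by
  rw [epowDeriv, tsum_eq_single a fun r hr => by simp [Ne.symm hr]]
  simp

lemma epowDeriv_le_epow_add (γ : ℕ →₀ ℕ) : epowDeriv w x γ ≤ epow (w + x) γ := by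
  obtain ⟨s, rfl⟩ := Multiset.toFinsupp.surjective γ
  induction s using Multiset.induction_on with
  | empty => simp
  | cons a s ih =>
    rw [← Multiset.singleton_add, map_add, Multiset.toFinsupp_singleton, epowDeriv_add,
      epowDeriv_single_one, epow_add, epow_single, epow_single, pow_one, pow_one,
      Pi.add_apply, add_mul, add_comm]
    gcongr
    exact epow_mono le_self_add _

lemma epowDeriv_smul_right (t : ℝ≥0∞) (γ : ℕ →₀ ℕ) :
    epowDeriv w (t • x) γ = t * epowDeriv w x γ := by
  simp only [epowDeriv, ← ENNReal.tsum_mul_left, Pi.smul_apply, smul_eq_mul]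
  congr 1 with r
  ring

lemma epowDeriv_zero_right (γ : ℕ →₀ ℕ) : epowDeriv w 0 γ = 0 := by
  simp [epowDeriv]

lemma epowDeriv_eq_epow_of_degree_eq_one {γ : ℕ →₀ ℕ} (hγ : γ.degree = 1) :
    epowDeriv w x γ = epow x γ := by
  obtain ⟨a, rfl⟩ : ∃ a, single a 1 = γ := by
    rw [← Set.mem_range, range_single_one]; exact hγ
  rw [epowDeriv_single_one, epow_single, pow_one]

lemma epowDeriv_zero_left_of_two_le_degree {γ : ℕ →₀ ℕ} (hγ : 2 ≤ γ.degree) :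
    epowDeriv 0 x γ = 0 := by
  refine ENNReal.tsum_eq_zero.mpr fun r => ?_
  rcases eq_or_ne (γ r) 0 with h | h
  · simp [h]
  have hle : single r 1 ≤ γ := single_le_iff.mpr (Nat.one_le_iff_ne_zero.mpr h)
  have hdeg : (γ - single r 1).degree + 1 = γ.degree := by
    simpa using congrArg degree (tsub_add_cancel_of_le hle)
  rw [epow_zero_left, mul_zero]
  rw [Ne, ← degree_eq_zero_iff]
  omega

end Monomial

lemma mdeg_eq_degree (p : MIdx) : mdeg p = (p.1 + p.2).degree := by
  rw [map_add]; rfl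

namespace PSMap

variable (F : PSMap) (N : ℕ) (w x : ℕ → ℝ≥0∞)

lemma dmajN_eq_tsum (j : ℕ) : F.dmajN N w x j =
    ∑' p : MIdx, if mdeg p = N then (‖F.coeff j p‖₊ : ℝ≥0∞) * epowDeriv w x (p.1 + p.2) else 0 := by
  refine tsum_congr fun p => ?_
  split_ifs
  · rw [epowDeriv, ← ENNReal.tsum_mul_left]
    congr 1 with r
    rw [coe_add, Pi.add_apply, Nat.cast_add]
    ring
  · exact tsum_zero

lemma dmajN_eq_zero (h : ∀ γ : ℕ →₀ ℕ, γ.degree = N → epowDeriv w x γ = 0) :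
    F.dmajN N w x = 0 := by
  ext j
  rw [dmajN_eq_tsum, Pi.zero_apply]
  refine ENNReal.tsum_eq_zero.mpr fun p => ?_
  split_ifs with hp
  · rw [h _ ((mdeg_eq_degree p).symm.trans hp), mul_zero]
  · rfl

lemma dmajN_zero : F.dmajN 0 w x = 0 :=
  F.dmajN_eq_zero 0 w x fun γ hγ => by rw [(degree_eq_zero_iff γ).mp hγ, epowDeriv_zero]

lemma dmajN_zero_right : F.dmajN N w 0 = 0 :=
  F.dmajN_eq_zero N w 0 fun γ _ => epowDeriv_zero_right w γ

lemma dmajN_zero_left (hN : 2 ≤ N) : F.dmajN N 0 x = 0 :=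
  F.dmajN_eq_zero N 0 x fun _ hγ => epowDeriv_zero_left_of_two_le_degree x (hγ ▸ hN)

lemma dmajN_one : F.dmajN 1 w x = F.majN 1 x := by
  ext j
  rw [dmajN_eq_tsum, majN]
  refine tsum_congr fun p => ?_
  split_ifs with hp
  · rw [epowDeriv_eq_epow_of_degree_eq_one w x ((mdeg_eq_degree p).symm.trans hp)]
  · rfl

lemma dmajN_smul_right (t : ℝ≥0∞) : F.dmajN N w (t • x) = t • F.dmajN N w x := by
  ext j
  simp only [dmajN_eq_tsum, Pi.smul_apply, smul_eq_mul, ← ENNReal.tsum_mul_left,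
    epowDeriv_smul_right, mul_ite, mul_zero, mul_left_comm t]

lemma dmajN_le_majN_add : F.dmajN N w x ≤ F.majN N (w + x) := fun j => by
  rw [dmajN_eq_tsum, majN]
  refine ENNReal.tsum_le_tsum fun p => ?_
  split_ifs
  · gcongr; exact epowDeriv_le_epow_add w x _
  · rfl

end PSMap

section DifferentialBound

variable {m n : ℝ} {F : PSMap} {C R : ℝ≥0∞}

lemma mul_hnorm_dmajN_le
    (hbd : ∀ (N : ℕ) (v : ℕ → ℝ≥0∞), hnorm n (F.majN N v) ≤ C * R ^ N * hnorm m v ^ N)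
    (N : ℕ) (t : ℝ≥0∞) (w x : ℕ → ℝ≥0∞) :
    t * hnorm n (F.dmajN N w x) ≤ C * R ^ N * (hnorm m w + t * hnorm m x) ^ N :=
  calc t * hnorm n (F.dmajN N w x) = hnorm n (F.dmajN N w (t • x)) := by
        rw [F.dmajN_smul_right, hnorm_smul]
    _ ≤ hnorm n (F.majN N (w + t • x)) := hnorm_mono (F.dmajN_le_majN_add N w _)
    _ ≤ C * R ^ N * hnorm m (w + t • x) ^ N := hbd N _
    _ ≤ C * R ^ N * (hnorm m w + t * hnorm m x) ^ N := by
        rw [← hnorm_smul]; gcongr; exact hnorm_add_le w _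

lemma hnorm_dmajN_add_two_le
    (hbd : ∀ (N : ℕ) (v : ℕ → ℝ≥0∞), hnorm n (F.majN N v) ≤ C * R ^ N * hnorm m v ^ N)
    (hC : C ≠ 0) (hR : R ≠ 0) (N : ℕ) (w x : ℕ → ℝ≥0∞) :
    hnorm n (F.dmajN (N + 2) w x) ≤
      C * (2 * R) ^ (N + 2) * hnorm m w ^ (N + 1) * hnorm m x := by
  set a := hnorm m w
  set b := hnorm m x
  rcases eq_or_ne b 0 with hb | hb
  · rw [hnorm_eq_zero_iff.mp hb, F.dmajN_zero_right, hnorm_eq_zero_iff.mpr rfl]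
    exact zero_le
  rcases eq_or_ne a 0 with ha | ha
  · rw [hnorm_eq_zero_iff.mp ha, F.dmajN_zero_left _ _ (by omega), hnorm_eq_zero_iff.mpr rfl]
    exact zero_le
  rcases eq_or_ne a ⊤ with ha' | ha'
  · simp [ha', hC, hR, hb]
  rcases eq_or_ne b ⊤ with hb' | hb'
  · simp [hb', hC, hR, ha]
  set t := a / b
  have ht : t ≠ 0 := ENNReal.div_ne_zero.mpr ⟨ha, hb'⟩
  have ht' : t ≠ ⊤ := ENNReal.div_ne_top ha' hb
  have htb : t * b = a := ENNReal.div_mul_cancel hb hb'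
  rw [← ENNReal.mul_le_mul_iff_right ht ht']
  calc t * hnorm n (F.dmajN (N + 2) w x) ≤ C * R ^ (N + 2) * (a + t * b) ^ (N + 2) :=
        mul_hnorm_dmajN_le hbd _ _ _ _
    _ = C * (2 * R) ^ (N + 2) * a ^ (N + 1) * (t * b) := by rw [htb]; ring
    _ = t * (C * (2 * R) ^ (N + 2) * a ^ (N + 1) * b) := by ring

lemma hnorm_dmajN_le
    (hbd : ∀ (N : ℕ) (v : ℕ → ℝ≥0∞), hnorm n (F.majN N v) ≤ C * R ^ N * hnorm m v ^ N)
    (hC : C ≠ 0) (hR : R ≠ 0) (N : ℕ) (w x : ℕ → ℝ≥0∞) :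
    hnorm n (F.dmajN N w x) ≤ C * (2 * R) ^ N * hnorm m w ^ (N - 1) * hnorm m x := by
  match N with
  | 0 => rw [F.dmajN_zero, hnorm_eq_zero_iff.mpr rfl]; exact zero_le
  | 1 =>
    calc hnorm n (F.dmajN 1 w x) = hnorm n (F.majN 1 x) := by rw [F.dmajN_one]
      _ ≤ C * R ^ 1 * hnorm m x ^ 1 := hbd 1 x
      _ ≤ C * (2 * R) ^ 1 * hnorm m w ^ 0 * hnorm m x := by
        simp only [pow_one, pow_zero, mul_one]
        gcongr
        exact le_mul_of_one_le_left' one_le_two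
  | N + 2 => exact hnorm_dmajN_add_two_le hbd hC hR N w x

end DifferentialBound

lemma enorm_cpow (u : ℕ → ℂ) (α : ℕ →₀ ℕ) : ‖cpow u α‖ₑ = epow (cabs u) α := by
  simp [cpow, epow, cabs, Finsupp.prod, enorm_eq_nnnorm, nnnorm_prod]

lemma Complex.enorm_natCast (n : ℕ) : ‖(n : ℂ)‖ₑ = n := by simp [enorm_eq_nnnorm]

lemma cabs_apply (u : ℕ → ℂ) (j : ℕ) : cabs u j = ‖u j‖ₑ := (enorm_eq_nnnorm _).symm

lemma cabs_conj (u : ℕ → ℂ) : cabs (fun i => conj (u i)) = cabs u := by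
  ext j; simp [cabs]

lemma PSMap.enorm_dapp_le_dmaj (F : PSMap) (u v : ℕ → ℂ) (j : ℕ) :
    ‖F.dapp u v j‖ₑ ≤ F.dmaj (cabs u) (cabs v) j := by
  refine enorm_tsum_le_tsum_enorm.trans (ENNReal.tsum_le_tsum fun p => ?_)
  refine enorm_tsum_le_tsum_enorm.trans (ENNReal.tsum_le_tsum fun r => ?_)
  have hα := natCast_mul_epow_tsub_single (cabs u) p.1 p.2 r
  have hβ := natCast_mul_epow_tsub_single (cabs u) p.2 p.1 r
  rw [add_comm p.2] at hβ
  rw [← enorm_eq_nnnorm, cabs_apply]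
  calc _ ≤ ‖F.coeff j p‖ₑ *
        (‖(p.1 r : ℂ) * v r * cpow u (p.1 - single r 1) * cpow (fun i => conj (u i)) p.2‖ₑ +
          ‖(p.2 r : ℂ) * conj (v r) * cpow u p.1 *
            cpow (fun i => conj (u i)) (p.2 - single r 1)‖ₑ) := by
        rw [enorm_mul]; gcongr; exact enorm_add_le _ _
    _ = ‖F.coeff j p‖ₑ *
        (‖v r‖ₑ * (p.1 r * (epow (cabs u) (p.1 - single r 1) * epow (cabs u) p.2)) +
          ‖v r‖ₑ * (p.2 r * (epow (cabs u) (p.2 - single r 1) * epow (cabs u) p.1))) := by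
        simp only [enorm_mul, enorm_cpow, cabs_conj, RCLike.enorm_conj, Complex.enorm_natCast]
        ring
    _ = _ := by rw [hα, hβ]; ring

/-- If `F : h^m → h^n` is a normally analytic germ, then the differential
`(u, v) ↦ dF(u)v` is a normally analytic germ `h^m × h^m → h^n`, with the componentwise
majorant bound `(dF(|u|)|v|)̲ ≤ dF̲(|u|)|v|`. -/
theorem differential_normally_analytic (m n : ℝ) (F : PSMap) (hF : NormAnalytic m n F) :
    -- the majorant of the differential is dominated by the differential of the majorant
    (∀ (u v : ℕ → ℂ) (j : ℕ),
      (‖F.dapp u v j‖₊ : ℝ≥0∞) ≤ F.dmaj (cabs u) (cabs v) j) ∧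
    -- and the differential is normally analytic on `h^m × h^m` (linearly in `v`)
    ∃ C R : ℝ≥0∞, 0 < C ∧ C < ∞ ∧ 0 < R ∧ R < ∞ ∧
      ∀ (N : ℕ) (w x : ℕ → ℝ≥0∞),
        hnorm n (F.dmajN N w x) ≤ C * R ^ N * hnorm m w ^ (N - 1) * hnorm m x := by
  obtain ⟨-, C, R, hC, hC', hR, hR', hbd⟩ := hF
  exact ⟨F.enorm_dapp_le_dmaj, C, 2 * R, hC, hC', ENNReal.mul_pos two_ne_zero hR.ne',
    ENNReal.mul_lt_top ENNReal.ofNat_lt_top hR', hnorm_dmajN_le hbd hC.ne' hR.ne'⟩
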